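/- arXiv:1803.11528 — 4 statements merged into one kernel-verified Lean document; each statement's English description precedes it below -/
import Mathlib

section
/- Let n ≥ 2 and let H be the subgroup of SL_n(ℤ) consisting of matrices M(Id, v) = [[Id, v],[0,1]] with v ∈ ℤ^{n-1}. Then the normalizer of H in SL_n(ℤ) consists exactly of the matrices of the form [[B, x],[0, ε]] where B ∈ GL_{n-1}(ℤ), x ∈ ℤ^{n-1}, ε = ±1, and det(B) = ε. -/
open Matrix
def Hsub (m : ℕ) : Subgroup (Matrix.SpecialLinearGroup (Fin m ⊕ Unit) ℤ) where
  carrier := {g | ∃ v : Fin m → ℤ,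
    (g : Matrix (Fin m ⊕ Unit) (Fin m ⊕ Unit) ℤ) =
      Matrix.fromBlocks 1 (Matrix.of fun i (_ : Unit) => v i) 0 1}
  one_mem' := ⟨0, by
    ext (i | i) (j | j) <;>
      simp [Matrix.SpecialLinearGroup.coe_one, Matrix.one_apply]⟩
  mul_mem' := by
    rintro a b ⟨v, hv⟩ ⟨w, hw⟩
    refine ⟨v + w, ?_⟩
    rw [Matrix.SpecialLinearGroup.coe_mul, hv, hw, Matrix.fromBlocks_multiply]
    ext (i | i) (j | j) <;> simp [add_comm]
  inv_mem' := by
    rintro a ⟨v, hv⟩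
    refine ⟨-v, ?_⟩
    have h : (a : Matrix (Fin m ⊕ Unit) (Fin m ⊕ Unit) ℤ) *
        Matrix.fromBlocks 1 (Matrix.of fun i (_ : Unit) => (-v) i) 0 1 = 1 := by
      rw [hv, Matrix.fromBlocks_multiply]
      ext (i | i) (j | j) <;> simp [Matrix.one_apply]
    calc (↑(a⁻¹) : Matrix (Fin m ⊕ Unit) (Fin m ⊕ Unit) ℤ)
        = ↑(a⁻¹) * ((a : Matrix (Fin m ⊕ Unit) (Fin m ⊕ Unit) ℤ) *
            Matrix.fromBlocks 1 (Matrix.of fun i (_ : Unit) => (-v) i) 0 1) := by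
          rw [h, mul_one]
      _ = Matrix.fromBlocks 1 (Matrix.of fun i (_ : Unit) => (-v) i) 0 1 := by
          rw [← mul_assoc, ← Matrix.SpecialLinearGroup.coe_mul, inv_mul_cancel,
            Matrix.SpecialLinearGroup.coe_one, one_mul]

/-! For any commutative ring and block sizes, the normalizer in `SL` of the unipotent radical
`U = {[[1, C], [0, 1]]}` is the block upper-triangular subgroup `P`. If `g` normalizes `U`, then
`g [[1, C], [0, 1]] = [[1, C'], [0, 1]] g`, and comparing lower-right blocks gives `g₂₁ C = 0` for
every `C`, so `g₂₁ = 0`. Conversely `[[A, X], [0, D]]` conjugates `[[1, C], [0, 1]]` to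
`[[1, A C D⁻¹], [0, 1]]`, which suffices because `P` is a group. Over `ℤ` with a `1 × 1` lower
block, `det A * ε = 1` forces `ε = ±1 = det A`. -/

namespace Matrix

variable {n o R : Type*}

theorem blockTriangular_isRight_iff [Zero R] {M : Matrix (n ⊕ o) (n ⊕ o) R} :
    M.BlockTriangular Sum.isRight ↔ M.toBlocks₂₁ = 0 := by
  constructor
  · intro hM
    ext i j
    exact hM (by simp)
  · rintro hM (_ | i) (j | _) hij
    all_goals first | exact congrFun₂ hM i j | contradiction

theorem eq_zero_of_forall_mul_eq_zero [DecidableEq n] [Fintype n] [DecidableEq o] [Semiring R]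
    {A : Matrix o n R} (hA : ∀ C : Matrix n o R, A * C = 0) : A = 0 := by
  ext i j
  simpa using congrFun₂ (hA (single j i 1)) i i

section Semiring

variable [Fintype n] [DecidableEq n] [Fintype o] [DecidableEq o] [Semiring R]

theorem toBlocks₂₂_mul_fromBlocks_one (M : Matrix (n ⊕ o) (n ⊕ o) R) (C : Matrix n o R) :
    (M * fromBlocks 1 C 0 1).toBlocks₂₂ = M.toBlocks₂₁ * C + M.toBlocks₂₂ := by
  conv_lhs => rw [← fromBlocks_toBlocks M]
  simp [fromBlocks_multiply]

theorem toBlocks₂₂_fromBlocks_one_mul (M : Matrix (n ⊕ o) (n ⊕ o) R) (C : Matrix n o R) :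
    (fromBlocks 1 C 0 1 * M).toBlocks₂₂ = M.toBlocks₂₂ := by
  conv_lhs => rw [← fromBlocks_toBlocks M]
  simp [fromBlocks_multiply]

theorem fromBlocks_mul_fromBlocks_one {A : Matrix n n R} {X C : Matrix n o R}
    {D D' : Matrix o o R} (hD : D' * D = 1) :
    fromBlocks A X 0 D * fromBlocks 1 C 0 1 =
      fromBlocks 1 (A * C * D') 0 1 * fromBlocks A X 0 D := by
  simp [fromBlocks_multiply, Matrix.mul_assoc, hD, add_comm]

end Semiring

namespace SpecialLinearGroup

variable [Fintype n] [DecidableEq n] [Fintype o] [DecidableEq o] [CommRing R]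

def blockTriangularSubgroup {α : Type*} [LinearOrder α] (b : n → α) :
    Subgroup (SpecialLinearGroup n R) where
  carrier := {g | (g : Matrix n n R).BlockTriangular b}
  one_mem' := blockTriangular_one
  mul_mem' hg hh := hg.mul hh
  inv_mem' {g} hg := by
    have hinv : (↑g⁻¹ : Matrix n n R) * g = 1 := by rw [← coe_mul, inv_mul_cancel, coe_one]
    let := invertibleOfLeftInverse _ _ hinv
    simpa [← inv_eq_left_inv hinv] using blockTriangular_inv_of_blockTriangular hg

variable (n o R) in
def unipotentRadical : Subgroup (SpecialLinearGroup (n ⊕ o) R) where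
  carrier := {g | ∃ C : Matrix n o R, (g : Matrix (n ⊕ o) (n ⊕ o) R) = fromBlocks 1 C 0 1}
  one_mem' := ⟨0, by simp⟩
  mul_mem' := by
    rintro g h ⟨C, hC⟩ ⟨C', hC'⟩
    exact ⟨C' + C, by simp [hC, hC', fromBlocks_multiply]⟩
  inv_mem' := by
    rintro g ⟨C, hC⟩
    let k : SpecialLinearGroup (n ⊕ o) R := ⟨fromBlocks 1 (-C) 0 1, by simp⟩
    have hk : g⁻¹ = k :=
      inv_eq_of_mul_eq_one_right (Subtype.ext (by rw [coe_mul, hC]; simp [k, fromBlocks_multiply]))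
    exact ⟨-C, by rw [hk]⟩

theorem conj_mem_unipotentRadical {g h : SpecialLinearGroup (n ⊕ o) R}
    (hg : g ∈ blockTriangularSubgroup Sum.isRight) (hh : h ∈ unipotentRadical n o R) :
    g * h * g⁻¹ ∈ unipotentRadical n o R := by
  obtain ⟨C, hC⟩ := hh
  obtain ⟨A, X, D, hAXD⟩ : ∃ A X D, (g : Matrix (n ⊕ o) (n ⊕ o) R) = fromBlocks A X 0 D :=
    ⟨_, _, _, by rw [← blockTriangular_isRight_iff.mp hg, fromBlocks_toBlocks]⟩
  have hD : IsUnit D.det := by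
    have hdet := g.prop
    rw [hAXD, det_fromBlocks_zero₂₁] at hdet
    exact IsUnit.of_mul_eq_one_right _ hdet
  have hcomm : (g : Matrix (n ⊕ o) (n ⊕ o) R) * fromBlocks 1 C 0 1 =
      fromBlocks 1 (A * C * D⁻¹) 0 1 * (g : Matrix (n ⊕ o) (n ⊕ o) R) := by
    rw [hAXD]
    exact fromBlocks_mul_fromBlocks_one (nonsing_inv_mul D hD)
  refine ⟨A * C * D⁻¹, ?_⟩
  rw [coe_mul, coe_mul, hC, hcomm, Matrix.mul_assoc, ← coe_mul, mul_inv_cancel, coe_one,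
    Matrix.mul_one]

theorem mem_blockTriangularSubgroup_of_mem_normalizer {g : SpecialLinearGroup (n ⊕ o) R}
    (hg : g ∈ Subgroup.normalizer (unipotentRadical n o R : Set (SpecialLinearGroup (n ⊕ o) R))) :
    g ∈ blockTriangularSubgroup Sum.isRight := by
  refine blockTriangular_isRight_iff.mpr (eq_zero_of_forall_mul_eq_zero fun C => ?_)
  let h : SpecialLinearGroup (n ⊕ o) R := ⟨fromBlocks 1 C 0 1, by simp⟩
  obtain ⟨C', hC'⟩ := (Subgroup.mem_normalizer_iff.mp hg h).mp ⟨C, rfl⟩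
  have hcomm : (g : Matrix (n ⊕ o) (n ⊕ o) R) * fromBlocks 1 C 0 1 =
      fromBlocks 1 C' 0 1 * (g : Matrix (n ⊕ o) (n ⊕ o) R) := by
    rw [← hC', ← coe_mul, inv_mul_cancel_right, coe_mul]
  simpa [toBlocks₂₂_mul_fromBlocks_one, toBlocks₂₂_fromBlocks_one_mul] using
    congrArg toBlocks₂₂ hcomm

theorem normalizer_unipotentRadical :
    Subgroup.normalizer (unipotentRadical n o R : Set (SpecialLinearGroup (n ⊕ o) R)) =
      blockTriangularSubgroup Sum.isRight :=
  le_antisymm (fun _ => mem_blockTriangularSubgroup_of_mem_normalizer)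
    (Subgroup.le_normalizer_iff.mpr fun _ hg _ hh => conj_mem_unipotentRadical hg hh)

theorem mem_blockTriangularSubgroup_isRight_iff {g : SpecialLinearGroup (n ⊕ Unit) ℤ} :
    g ∈ blockTriangularSubgroup Sum.isRight ↔
      ∃ (B : Matrix n n ℤ) (x : n → ℤ) (ε : ℤ), (ε = 1 ∨ ε = -1) ∧ B.det = ε ∧
        (g : Matrix (n ⊕ Unit) (n ⊕ Unit) ℤ) =
          fromBlocks B (of fun i (_ : Unit) => x i) 0 (of fun (_ : Unit) (_ : Unit) => ε) := by
  constructor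
  · intro hg
    obtain ⟨B, x, ε, hBxε⟩ : ∃ (B : Matrix n n ℤ) (x : n → ℤ) (ε : ℤ),
        (g : Matrix (n ⊕ Unit) (n ⊕ Unit) ℤ) =
          fromBlocks B (of fun i (_ : Unit) => x i) 0 (of fun (_ : Unit) (_ : Unit) => ε) :=
      ⟨_, fun i => g (.inl i) (.inr ()), g (.inr ()) (.inr ()), by
        rw [← blockTriangular_isRight_iff.mp hg]; exact (fromBlocks_toBlocks _).symm⟩
    have hdet : B.det * ε = 1 := by simpa [hBxε, det_fromBlocks_zero₂₁] using g.prop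
    refine ⟨B, x, ε, ?_, ?_, hBxε⟩ <;>
      rcases Int.eq_one_or_neg_one_of_mul_eq_one' hdet with ⟨h₁, h₂⟩ | ⟨h₁, h₂⟩ <;> simp [h₁, h₂]
  · rintro ⟨B, x, ε, -, -, hg⟩
    exact blockTriangular_isRight_iff.mpr (by rw [hg, toBlocks_fromBlocks₂₁])

end SpecialLinearGroup
end Matrix

open Matrix.SpecialLinearGroup

theorem Hsub_eq_unipotentRadical (m : ℕ) : Hsub m = unipotentRadical (Fin m) Unit ℤ := by
  ext g
  constructor
  · rintro ⟨v, hv⟩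
    exact ⟨_, hv⟩
  · rintro ⟨C, hC⟩
    exact ⟨fun i => C i (), hC⟩

theorem stmt_7_general (m : ℕ) (g : Matrix.SpecialLinearGroup (Fin m ⊕ Unit) ℤ) :
    g ∈ Subgroup.normalizer (Hsub m : Set (Matrix.SpecialLinearGroup (Fin m ⊕ Unit) ℤ)) ↔
      ∃ (B : Matrix (Fin m) (Fin m) ℤ) (x : Fin m → ℤ) (ε : ℤ),
        (ε = 1 ∨ ε = -1) ∧ B.det = ε ∧
        (g : Matrix (Fin m ⊕ Unit) (Fin m ⊕ Unit) ℤ) =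
          Matrix.fromBlocks B (Matrix.of fun i (_ : Unit) => x i) 0
            (Matrix.of fun (_ : Unit) (_ : Unit) => ε) := by
  rw [Hsub_eq_unipotentRadical, normalizer_unipotentRadical,
    mem_blockTriangularSubgroup_isRight_iff]

/-- The normalizer of H in SL_n(ℤ) (n = m+1 ≥ 2) consists exactly of the matrices
[[B, x],[0, ε]] with B ∈ GL_{n-1}(ℤ) (i.e. det B = ±1), ε = ±1 and det B = ε. -/
theorem stmt_7 (m : ℕ) (hm : 1 ≤ m) (g : Matrix.SpecialLinearGroup (Fin m ⊕ Unit) ℤ) :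
    g ∈ Subgroup.normalizer (Hsub m : Set (Matrix.SpecialLinearGroup (Fin m ⊕ Unit) ℤ)) ↔
      ∃ (B : Matrix (Fin m) (Fin m) ℤ) (x : Fin m → ℤ) (ε : ℤ),
        (ε = 1 ∨ ε = -1) ∧ B.det = ε ∧
        (g : Matrix (Fin m ⊕ Unit) (Fin m ⊕ Unit) ℤ) =
          Matrix.fromBlocks B (Matrix.of fun i (_ : Unit) => x i) 0
            (Matrix.of fun (_ : Unit) (_ : Unit) => ε) :=
  stmt_7_general m g
end

section
/- Let n ≥ 2 and let H be the subgroup of SL_n(ℤ) of matrices [[Id, v],[0,1]] with v ∈ ℤ^{n-1}. Then the normalizer of H in SL_n(ℤ) has infinite index in SL_n(ℤ). -/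
/-
Conjugating the element `1 + E_{i,n}` of `H` by the lower transvection `1 + t E_{n,i}` changes
its `(i, i)` entry to `1 - t`, while every element of `H` has identity upper-left block; so no
nontrivial lower transvection normalizes `H`. The lower transvections form a copy of `ℤ` meeting
the normalizer trivially, hence they inject into the coset space, which is therefore infinite.
-/

open Matrix
theorem Subgroup.index_eq_zero_of_map_mem_eq_one {G K : Type*} [Group G] [Group K] [Infinite K]
    {N : Subgroup G} (f : K →* G) (hf : ∀ k, f k ∈ N → k = 1) : N.index = 0 := by
  refine Subgroup.index_eq_zero_iff_infinite.mpr
    (Infinite.of_injective (fun k => (f k : G ⧸ N)) fun a b hab => ?_)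
  have hmem : f (a⁻¹ * b) ∈ N := by simpa using QuotientGroup.eq.mp hab
  exact inv_mul_eq_one.mp (hf _ hmem)

namespace Matrix.SpecialLinearGroup

variable {ι R : Type*} [DecidableEq ι] [Fintype ι] [CommRing R]

def transvectionHom {i j : ι} (hij : i ≠ j) : Multiplicative R →* SpecialLinearGroup ι R where
  toFun t := transvection hij t.toAdd
  map_one' := transvection_coeff_zero hij
  map_mul' _ _ := transvection_add hij _ _

theorem transvectionHom_apply {i j : ι} (hij : i ≠ j) (t : Multiplicative R) :
    transvectionHom hij t = transvection hij t.toAdd :=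
  rfl

theorem transvection_conj_transvection_apply {i j : ι} (hij : i ≠ j) (c t : R) :
    ((transvection hij.symm t * transvection hij c * (transvection hij.symm t)⁻¹ :
      SpecialLinearGroup ι R) : Matrix ι ι R) i i = 1 - c * t := by
  rw [transvection_inv]
  change (Matrix.transvection j i t * Matrix.transvection i j c *
    Matrix.transvection j i (-t)) i i = _
  rw [mul_assoc, transvection_mul_apply_of_ne _ _ _ _ hij, mul_transvection_apply_same]
  simp [Matrix.transvection, hij, hij.symm, sub_eq_add_neg, mul_comm]

end Matrix.SpecialLinearGroup

namespace Hsub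

theorem coe_apply_inl_inl {m : ℕ} {g : SpecialLinearGroup (Fin m ⊕ Unit) ℤ} (hg : g ∈ Hsub m)
    (i j : Fin m) :
    (g : Matrix (Fin m ⊕ Unit) (Fin m ⊕ Unit) ℤ) (.inl i) (.inl j) =
      (1 : Matrix (Fin m) (Fin m) ℤ) i j := by
  obtain ⟨v, hv⟩ := hg
  rw [hv, fromBlocks_apply₁₁]

theorem transvection_inl_inr_mem {m : ℕ} (i : Fin m) (c : ℤ) :
    SpecialLinearGroup.transvection (Sum.inl_ne_inr (a := i) (b := ())) c ∈ Hsub m := by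
  refine ⟨Pi.single i c, ?_⟩
  ext (k | k) (l | l) <;>
    simp [SpecialLinearGroup.transvection_coe, one_apply, single_apply, Pi.single_apply, eq_comm]

end Hsub

-- `Subgroup.index` is `0` exactly when the index is infinite.
/-- The normalizer of H has infinite index in SL_n(ℤ) (n = m+1 ≥ 2);
`Subgroup.index = 0` means infinite index. -/
theorem stmt_8 (m : ℕ) (hm : 1 ≤ m) :
    (Subgroup.normalizer ((Hsub m : Subgroup _) : Set (Matrix.SpecialLinearGroup (Fin m ⊕ Unit) ℤ))).index = 0 := by
  let i : Fin m := ⟨0, hm⟩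
  refine Subgroup.index_eq_zero_of_map_mem_eq_one
    (SpecialLinearGroup.transvectionHom (Sum.inl_ne_inr (a := i) (b := ())).symm) fun t ht => ?_
  have hconj := (Subgroup.mem_normalizer_iff.mp ht _).mp (Hsub.transvection_inl_inr_mem i 1)
  have h := Hsub.coe_apply_inl_inl hconj i i
  rw [SpecialLinearGroup.transvectionHom_apply,
    SpecialLinearGroup.transvection_conj_transvection_apply] at h
  simpa using h
end

section
/- For every n ≥ 2 there exists r = r(n) ≥ 1 depending only on n such that every virtually unipotent matrix g ∈ SL_n(ℤ) satisfies (g^r - Id)^n = 0. -/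
/-!
Over `ℂ`, every eigenvalue `μ` of `g` is a root of unity, since `g ^ m - 1` is nilpotent, and a
root of the characteristic polynomial of `g`, an integer polynomial of degree `n`. If `μ` has
order `k`, its minimal polynomial over `ℤ` has degree at least `φ k`, so `φ k ≤ n`; as
`p ^ a ≤ 2 φ (p ^ a)` for prime powers, this forces `k ∣ (2n)!`. Hence for `r = (2n)!` the only
eigenvalue of `g ^ r - 1` is `0`, its characteristic polynomial is `X ^ n`, and Cayley–Hamilton
gives `(g ^ r - 1) ^ n = 0`.
-/

open Polynomial Nat

theorem Nat.Prime.pow_le_two_mul_totient {p : ℕ} (hp : p.Prime) (a : ℕ) :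
    p ^ a ≤ 2 * φ (p ^ a) := by
  rcases a with _ | a
  · simp
  rw [totient_prime_pow_succ hp, pow_succ, mul_left_comm]
  exact Nat.mul_le_mul_left _ (by have := hp.two_le; omega)

theorem Nat.dvd_factorial_of_totient_le {k n : ℕ} (hk : k ≠ 0) (h : φ k ≤ n) :
    k ∣ (2 * n)! := by
  refine (dvd_iff_prime_pow_dvd_dvd _ k).mpr fun p a hp hpa => dvd_factorial (pow_pos hp.pos a) ?_
  have : φ (p ^ a) ≤ φ k :=
    le_of_dvd (totient_pos.mpr (Nat.pos_of_ne_zero hk)) (totient_dvd_of_dvd hpa)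
  linarith [hp.pow_le_two_mul_totient a]

theorem IsPrimitiveRoot.totient_le_natDegree {K : Type*} [CommRing K] [IsDomain K] [CharZero K]
    {μ : K} {k : ℕ} (h : IsPrimitiveRoot μ k) (hk : 0 < k) {p : ℤ[X]} (hp0 : p ≠ 0)
    (hp : aeval μ p = 0) : φ k ≤ p.natDegree :=
  h.totient_le_degree_minpoly.trans <|
    natDegree_le_of_dvd (minpoly.isIntegrallyClosed_dvd (h.isIntegral hk) hp) hp0

theorem IsOfFinOrder.pow_factorial_eq_one {K : Type*} [CommRing K] [IsDomain K] [CharZero K]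
    {μ : K} (hμ : IsOfFinOrder μ) {p : ℤ[X]} (hp0 : p ≠ 0) (hp : aeval μ p = 0) :
    μ ^ (2 * p.natDegree)! = 1 := by
  have hk := hμ.orderOf_pos
  exact orderOf_dvd_iff_pow_eq_one.mp <| dvd_factorial_of_totient_le hk.ne'
    ((IsPrimitiveRoot.orderOf μ).totient_le_natDegree hk hp0 hp)

namespace spectrum

variable {K A : Type*} [Field K] [Ring A] [Algebra K A]

theorem subset_singleton_zero_of_isNilpotent {a : A} (ha : IsNilpotent a) :
    spectrum K a ⊆ {0} := by
  intro t ht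
  by_contra h0
  rw [mem_iff, sub_eq_add_neg] at ht
  exact ht (ha.neg.isUnit_add_left_of_commute ((IsUnit.mk0 t h0).map (algebraMap K A))
    (Algebra.commute_algebraMap_right t a).neg_left)

theorem eval_eq_zero_of_isNilpotent_aeval {a : A} {p : K[X]} (h : IsNilpotent (aeval a p))
    {μ : K} (hμ : μ ∈ spectrum K a) : p.eval μ = 0 :=
  subset_singleton_zero_of_isNilpotent h (subset_polynomial_aeval a p ⟨μ, hμ, rfl⟩)

end spectrum

theorem Matrix.pow_card_eq_zero_of_spectrum_subset_singleton_zero {ι K : Type*} [Fintype ι]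
    [DecidableEq ι] [Field K] [IsAlgClosed K] {M : Matrix ι ι K} (h : spectrum K M ⊆ {0}) :
    M ^ Fintype.card ι = 0 := by
  have hroots : M.charpoly.roots = Multiset.replicate (Fintype.card ι) 0 := by
    refine Multiset.eq_replicate.mpr ⟨?_, fun μ hμ => h ?_⟩
    · rw [splits_iff_card_roots.mp (IsAlgClosed.splits _), charpoly_natDegree_eq_dim]
    · exact mem_spectrum_iff_isRoot_charpoly.mpr (isRoot_of_mem_roots hμ)
  have hX : M.charpoly = X ^ Fintype.card ι := by
    rw [(IsAlgClosed.splits _).eq_prod_roots_of_monic M.charpoly_monic, hroots]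
    simp
  simpa [hX] using M.aeval_self_charpoly

theorem Matrix.pow_factorial_sub_one_pow_card_eq_zero {ι : Type*} [Fintype ι]
    [DecidableEq ι] {A : Matrix ι ι ℤ} {m : ℕ} (hm : 0 < m) (hA : IsNilpotent (A ^ m - 1)) :
    (A ^ (2 * Fintype.card ι)! - 1) ^ Fintype.card ι = 0 := by
  set r := (2 * Fintype.card ι)!
  let ψ := (Int.castRingHom ℂ).mapMatrix (m := ι)
  have hψ : Function.Injective ψ := Matrix.map_injective Int.cast_injective
  have aeval_X_pow_sub_one (k : ℕ) : aeval (ψ A) (X ^ k - 1 : ℂ[X]) = ψ (A ^ k - 1) := by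
    simp
  have hroot : ∀ μ ∈ spectrum ℂ (ψ A), μ ^ r = 1 := by
    intro μ hμ
    have hμm : μ ^ m = 1 := by
      have h := spectrum.eval_eq_zero_of_isNilpotent_aeval
        (by rw [aeval_X_pow_sub_one]; exact hA.map ψ) hμ
      simpa [sub_eq_zero] using h
    have hχ : aeval μ A.charpoly = 0 := by
      rw [aeval_def, eval₂_eq_eval_map, ← charpoly_map]
      exact mem_spectrum_iff_isRoot_charpoly.mp hμ
    simpa [A.charpoly_natDegree_eq_dim] using (isOfFinOrder_iff_pow_eq_one.mpr ⟨m, hm, hμm⟩)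
      |>.pow_factorial_eq_one A.charpoly_monic.ne_zero hχ
  have hspec : spectrum ℂ (ψ (A ^ r - 1)) ⊆ {0} := by
    rw [← aeval_X_pow_sub_one, spectrum.map_polynomial_aeval_of_degree_pos]
    · rintro _ ⟨μ, hμ, rfl⟩
      simp [hroot μ hμ]
    · have hr : 0 < r := factorial_pos _
      rw [← C_1, degree_X_pow_sub_C hr]
      exact_mod_cast hr
  apply hψ
  simpa using pow_card_eq_zero_of_spectrum_subset_singleton_zero hspec

theorem stmt_12_general (n : ℕ) :
    ∃ r : ℕ, 1 ≤ r ∧ ∀ g : Matrix.SpecialLinearGroup (Fin n) ℤ,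
      (∃ m : ℕ, 1 ≤ m ∧
        IsNilpotent ((g : Matrix (Fin n) (Fin n) ℤ) ^ m - 1)) →
      ((g : Matrix (Fin n) (Fin n) ℤ) ^ r - 1) ^ n = 0 := by
  refine ⟨(2 * n)!, factorial_pos _, ?_⟩
  rintro g ⟨m, hm, hg⟩
  simpa using Matrix.pow_factorial_sub_one_pow_card_eq_zero hm hg

/-- For every n ≥ 2 there is r = r(n) ≥ 1 such that every virtually unipotent
g ∈ SL_n(ℤ) satisfies (g^r - Id)^n = 0.  Here g is virtually unipotent if g^m is
unipotent (i.e. g^m - Id is nilpotent) for some m ≥ 1. -/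
theorem stmt_12 (n : ℕ) (hn : 2 ≤ n) :
    ∃ r : ℕ, 1 ≤ r ∧ ∀ g : Matrix.SpecialLinearGroup (Fin n) ℤ,
      (∃ m : ℕ, 1 ≤ m ∧
        IsNilpotent ((g : Matrix (Fin n) (Fin n) ℤ) ^ m - 1)) →
      ((g : Matrix (Fin n) (Fin n) ℤ) ^ r - 1) ^ n = 0 :=
  stmt_12_general n
end

section
/- Let n ≥ 2, k ≥ 1, R = ℤ[x]/(x^{k+1}), and let N be the kernel of the homomorphism SL_n(R) → SL_n(ℤ) induced by x ↦ 0. Then N is a nilpotent group of nilpotency class at most k. -/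
/-!
If `A ≡ 1 mod I` and `B ≡ 1 mod J`, then `AB - BA = (A - 1)(B - 1) - (B - 1)(A - 1)` has entries
in `IJ`, so `⁅A, B⁆ - 1 = (AB - BA)(BA)⁻¹ ≡ 0 mod IJ`. Hence the `m`-th term of the lower central
series of the congruence subgroup of level `I` has level `I ^ (m + 1)`. For `R = ℤ[x]/(x^{k+1})`
the kernel of reduction at `x = 0` is the congruence subgroup of level `(x)`, and `(x)^{k+1} = 0`.
-/

open Polynomial

/-- The ring ℤ[x]/(x^{k+1}). -/
abbrev Rk (k : ℕ) : Type :=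
  Polynomial ℤ ⧸ Ideal.span ({(X : Polynomial ℤ) ^ (k + 1)} : Set (Polynomial ℤ))

/-- The ring homomorphism ℤ[x]/(x^{k+1}) → ℤ induced by evaluation at 0. -/
noncomputable def ev0 (k : ℕ) : Rk k →+* ℤ :=
  Ideal.Quotient.lift _ (Polynomial.evalRingHom (0 : ℤ)) (by
    intro f hf
    rw [Ideal.mem_span_singleton] at hf
    obtain ⟨g, rfl⟩ := hf
    simp [Polynomial.eval_mul, Polynomial.eval_pow])

/-- The induced group homomorphism SL_n(ℤ[x]/(x^{k+1})) → SL_n(ℤ). -/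
noncomputable def redMap (n k : ℕ) :
    Matrix.SpecialLinearGroup (Fin n) (Rk k) →*
      Matrix.SpecialLinearGroup (Fin n) ℤ :=
  Matrix.SpecialLinearGroup.map (ev0 k)

section IdealMatrix

variable {R : Type*} [CommRing R] {n : Type*} [Fintype n] [DecidableEq n]

theorem Ideal.mul_mem_matrix_mul {I J : Ideal R} {M N : Matrix n n R}
    (hM : M ∈ I.matrix n) (hN : N ∈ J.matrix n) : M * N ∈ (I * J).matrix n := fun i j =>
  Ideal.sum_mem _ fun l _ => Ideal.mul_mem_mul (hM i l) (hN l j)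

theorem Ideal.mul_mem_matrix_right {I : Ideal R} {M : Matrix n n R}
    (hM : M ∈ I.matrix n) (P : Matrix n n R) : M * P ∈ I.matrix n := by
  simpa only [Ideal.mul_top] using
    Ideal.mul_mem_matrix_mul hM ((Ideal.mem_matrix _ ⊤ P).2 fun _ _ => Submodule.mem_top)

end IdealMatrix

namespace Matrix.SpecialLinearGroup

open scoped commutatorElement

variable {n : Type*} [Fintype n] [DecidableEq n] {R : Type*} [CommRing R]

def congruenceSubgroup (I : Ideal R) : Subgroup (SpecialLinearGroup n R) :=
  (map (Ideal.Quotient.mk I)).ker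

theorem mem_ker_map_iff {S : Type*} [CommRing S] (f : R →+* S) (A : SpecialLinearGroup n R) :
    A ∈ (map f).ker ↔ (A : Matrix n n R) - 1 ∈ (RingHom.ker f).matrix n := by
  have hsub : ((A : Matrix n n R) - 1).map f =
      ((map f A : SpecialLinearGroup n S) : Matrix n n S) - 1 := by
    rw [map_apply_coe, RingHom.mapMatrix_apply, Matrix.map_sub _ (map_sub f),
      Matrix.map_one _ (map_zero f) (map_one f)]
  rw [MonoidHom.mem_ker, SpecialLinearGroup.ext_iff, Matrix.ext_iff, coe_one, ← sub_eq_zero,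
    ← hsub, Ideal.mem_matrix]
  simp only [← Matrix.ext_iff, Matrix.map_apply, Matrix.zero_apply, RingHom.mem_ker]

theorem ker_map_eq_congruenceSubgroup {S : Type*} [CommRing S] (f : R →+* S) :
    (map f).ker = congruenceSubgroup (n := n) (RingHom.ker f) := by
  ext A
  rw [congruenceSubgroup, mem_ker_map_iff, mem_ker_map_iff, Ideal.mk_ker]

theorem mem_congruenceSubgroup_iff {I : Ideal R} {A : SpecialLinearGroup n R} :
    A ∈ congruenceSubgroup I ↔ (A : Matrix n n R) - 1 ∈ I.matrix n := by
  rw [congruenceSubgroup, mem_ker_map_iff, Ideal.mk_ker]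

theorem congruenceSubgroup_bot : congruenceSubgroup (n := n) (⊥ : Ideal R) = ⊥ := by
  ext A
  rw [mem_congruenceSubgroup_iff, Ideal.matrix_bot, Submodule.mem_bot, Subgroup.mem_bot,
    sub_eq_zero, SpecialLinearGroup.ext_iff A 1, Matrix.ext_iff, coe_one]

theorem commutatorElement_mem_congruenceSubgroup_mul {I J : Ideal R}
    {A B : SpecialLinearGroup n R} (hA : A ∈ congruenceSubgroup I)
    (hB : B ∈ congruenceSubgroup J) : ⁅A, B⁆ ∈ congruenceSubgroup (I * J) := by
  rw [mem_congruenceSubgroup_iff] at hA hB ⊢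
  set a := (A : Matrix n n R) - 1
  set b := (B : Matrix n n R) - 1
  have hcomm : ((⁅A, B⁆ : SpecialLinearGroup n R) : Matrix n n R) - 1 =
      (a * b - b * a) * ((B * A)⁻¹ : SpecialLinearGroup n R) := by
    have hBA : (B : Matrix n n R) * A * ((B * A)⁻¹ : SpecialLinearGroup n R) = 1 := by
      rw [← coe_mul, ← coe_mul, mul_inv_cancel, coe_one]
    rw [show ⁅A, B⁆ = A * B * (B * A)⁻¹ by group, coe_mul, coe_mul,
      show a * b - b * a = A * B - B * A by
        simp only [a, b, sub_mul, mul_sub, mul_one, one_mul]; abel,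
      sub_mul, hBA]
  have hba : b * a ∈ (I * J).matrix n := mul_comm J I ▸ Ideal.mul_mem_matrix_mul hB hA
  rw [hcomm]
  exact Ideal.mul_mem_matrix_right (sub_mem (Ideal.mul_mem_matrix_mul hA hB) hba) _

theorem lowerCentralSeries_congruenceSubgroup_le (I : Ideal R) (m : ℕ) :
    (congruenceSubgroup (n := n) I).lowerCentralSeries m ≤ congruenceSubgroup (I ^ (m + 1)) := by
  induction m with
  | zero => simp
  | succ m ih =>
    rw [Subgroup.lowerCentralSeries_succ, Subgroup.commutator_le, pow_succ _ (m + 1)]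
    exact fun A hA B hB => commutatorElement_mem_congruenceSubgroup_mul (ih hA) hB

theorem lowerCentralSeries_congruenceSubgroup_eq_bot {I : Ideal R} {m : ℕ}
    (hI : I ^ (m + 1) = ⊥) : (congruenceSubgroup (n := n) I).lowerCentralSeries m = ⊥ := by
  simpa only [hI, congruenceSubgroup_bot, le_bot_iff] using
    lowerCentralSeries_congruenceSubgroup_le (n := n) I m

end Matrix.SpecialLinearGroup

theorem ker_ev0_le_span_X (k : ℕ) :
    RingHom.ker (ev0 k) ≤ Ideal.span {Ideal.Quotient.mk _ (X : Polynomial ℤ)} := by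
  intro r hr
  obtain ⟨f, rfl⟩ := Ideal.Quotient.mk_surjective r
  have hf : f.coeff 0 = 0 := by
    rw [coeff_zero_eq_eval_zero]
    simpa [ev0] using hr
  exact Ideal.mem_span_singleton.2 (map_dvd _ (X_dvd_iff.2 hf))

theorem ker_ev0_pow_eq_bot (k : ℕ) : RingHom.ker (ev0 k) ^ (k + 1) = ⊥ := by
  refine le_bot_iff.1 ((Ideal.pow_right_mono (ker_ev0_le_span_X k) _).trans ?_)
  rw [Ideal.span_singleton_pow, ← map_pow, le_bot_iff, Ideal.span_singleton_eq_bot]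
  exact Ideal.Quotient.eq_zero_iff_mem.2 (Ideal.mem_span_singleton_self _)

open Matrix.SpecialLinearGroup in
theorem stmt_18_general (n k : ℕ) :
    Group.IsNilpotent ((redMap n k).ker) ∧
      lowerCentralSeries ((redMap n k).ker) k = ⊥ := by
  have hbot : ((redMap n k).ker).lowerCentralSeries k = ⊥ := by
    rw [redMap, ker_map_eq_congruenceSubgroup]
    exact lowerCentralSeries_congruenceSubgroup_eq_bot (ker_ev0_pow_eq_bot k)
  exact ⟨Subgroup.isNilpotent_of_lowerCentralSeries_eq_bot hbot, hbot⟩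

/-- The kernel N of SL_n(ℤ[x]/(x^{k+1})) → SL_n(ℤ) is nilpotent of class at most k
(its lower central series vanishes at stage k). -/
theorem stmt_18 (n k : ℕ) (hn : 2 ≤ n) (hk : 1 ≤ k) :
    Group.IsNilpotent ((redMap n k).ker) ∧
      lowerCentralSeries ((redMap n k).ker) k = ⊥ :=
  stmt_18_general n k
end
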